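/- Define s_0: C → A* by 0 ↦ c, 1 ↦ ε, 2 ↦ ε, 3 ↦ c, 4 ↦ c, 5 ↦ c, 6 ↦ ε, 7 ↦ a, 8 ↦ c, and s_1: C → A* by 0 ↦ ε, 1 ↦ a, 2 ↦ a, 3 ↦ ε, 4 ↦ ε, 5 ↦ ε, 6 ↦ a, 7 ↦ a, 8 ↦ ε. Then for every two-letter word yx in the set {01, 66, 12, 31, 23, 34, 26, 45, 62, 47, 84, 78, 54, 41} and each i ∈ {0,1}, one has the equality of finite words τ_i(π(μ(x))) · s_i(x) = s_i(y) · φ_i(τ_i(π(x))). -/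
import Mathlib


/-- The alphabet `A = {a, b, c}`. -/
inductive A : Type
  | a | b | c
deriving DecidableEq, Repr

/-- The substitution `φ0 : a ↦ abc, b ↦ a, c ↦ ac`. -/
def phi0 : A → List A
  | A.a => [A.a, A.b, A.c]
  | A.b => [A.a]
  | A.c => [A.a, A.c]

/-- The substitution `φ1 : a ↦ cba, b ↦ a, c ↦ ca`. -/
def phi1 : A → List A
  | A.a => [A.c, A.b, A.a]
  | A.b => [A.a]
  | A.c => [A.c, A.a]

/-- The action of a morphism (given by its values on letters) on finite words. -/
def applyMorphism {α β : Type*} (φ : α → List β) (l : List α) : List β :=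
  l.flatMap φ

/-- The prefix `u[:n]` of length `n` of an infinite word `u`. -/
def pref {α : Type*} (u : ℕ → α) (n : ℕ) : List α :=
  (List.range n).map u

/-- A finite word `l` is a prefix of the infinite word `u`. -/
def PrefixOfSeq {α : Type*} (l : List α) (u : ℕ → α) : Prop :=
  ∀ i : ℕ, ∀ h : i < l.length, l.get ⟨i, h⟩ = u i

/-- The infinite word `u` is a (one-sided) fixed point of the substitution `φ`,
i.e. `φ(u) = u`: the image of every prefix of `u` is again a prefix of `u`. -/
def IsFixedPointOf {α : Type*} (φ : α → List α) (u : ℕ → α) : Prop :=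
  ∀ n : ℕ, PrefixOfSeq (applyMorphism φ (pref u n)) u

/-- A brick over the alphabet `A`: an element of `A × A × ℤ`. -/
abbrev Brick : Type := A × A × ℤ

/-- The substitution `μ` over `C = {0, 1, …, 8}`. -/
def mu : Fin 9 → List (Fin 9)
  | 0 => [0, 1]
  | 1 => [2, 3]
  | 2 => [4, 5]
  | 3 => [4, 1]
  | 4 => [2, 3, 1]
  | 5 => [2, 6]
  | 6 => [4, 7, 8]
  | 7 => [2]
  | 8 => [6, 6]

/-- The morphism `π : C → B(A)` sending each letter of `C` to a brick. -/
def piB : Fin 9 → Brick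
  | 0 => (A.a, A.c, 0)
  | 1 => (A.b, A.a, -1)
  | 2 => (A.c, A.c, 1)
  | 3 => (A.a, A.b, 1)
  | 4 => (A.a, A.a, -1)
  | 5 => (A.c, A.c, -1)
  | 6 => (A.a, A.a, 1)
  | 7 => (A.b, A.c, -1)
  | 8 => (A.c, A.b, 0)

/-- `τ_0`: projection of a finite word of bricks onto the first components. -/
def tau0 (z : List Brick) : List A := z.map (fun b => b.1)

/-- `τ_1`: projection of a finite word of bricks onto the second components. -/
def tau1 (z : List Brick) : List A := z.map (fun b => b.2.1)

/-- The map `s_0 : C → A*`. -/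
def s0 : Fin 9 → List A
  | 0 => [A.c]
  | 1 => []
  | 2 => []
  | 3 => [A.c]
  | 4 => [A.c]
  | 5 => [A.c]
  | 6 => []
  | 7 => [A.a]
  | 8 => [A.c]

/-- The map `s_1 : C → A*`. -/
def s1 : Fin 9 → List A
  | 0 => []
  | 1 => [A.a]
  | 2 => [A.a]
  | 3 => []
  | 4 => []
  | 5 => []
  | 6 => [A.a]
  | 7 => [A.a]
  | 8 => []

/-- For every two-letter word `yx` in the set
`{01, 66, 12, 31, 23, 34, 26, 45, 62, 47, 84, 78, 54, 41}` and each `i ∈ {0,1}`,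
we have `τ_i(π(μ(x))) · s_i(x) = s_i(y) · φ_i(τ_i(π(x)))`. -/
theorem tau_pi_mu_letter_eq :
    ∀ y x : Fin 9,
      [y, x] ∈ [([0, 1] : List (Fin 9)), [6, 6], [1, 2], [3, 1], [2, 3], [3, 4],
          [2, 6], [4, 5], [6, 2], [4, 7], [8, 4], [7, 8], [5, 4], [4, 1]] →
      tau0 ((mu x).map piB) ++ s0 x = s0 y ++ applyMorphism phi0 (tau0 [piB x]) ∧
      tau1 ((mu x).map piB) ++ s1 x = s1 y ++ applyMorphism phi1 (tau1 [piB x]) := by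
  decide
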